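/- arXiv:1903.05489 — 2 statements merged into one kernel-verified Lean document; each statement's English description precedes it below -/
import Mathlib

section
/- Let m, p be natural numbers, Q₁ a real m×m matrix, Q₂ a real m×p matrix, and Q₄ a real p×p matrix with Q₄ᵀ = Q₄ and Q₄ invertible. Let i, j ∈ Fin p with i ≠ j and set w := e_i - e_j ∈ ℝ^p. Define Q_red(τ) := Q₁ - Q₂ * (Q₄ + τ • (w wᵀ))⁻¹ * Q₂ᵀ and Q_ac := -(Q₂ * Q₄⁻¹). Suppose λ : ℝ → ℝ and u : ℝ → ℝ^m are differentiable at 0, and for all τ in some neighborhood of 0 the eigen-equation Q_red(τ) *ᵥ u(τ) = λ(τ) • u(τ) holds. Let v ∈ ℝ^m satisfy vᵀ * Q_red(0) = λ(0) • vᵀ and v ⬝ᵥ u(0) = 1. Then λ'(0) = (v ⬝ᵥ (Q_ac *ᵥ w)) * ((Q_ac *ᵥ w) ⬝ᵥ u(0)); i.e. the sensitivity of the eigenvalue of the Kron-reduced matrix to the interior susceptance perturbation B_ij equals v₁ᵀ Q_ac (e_i - e_j)(e_i - e_j)ᵀ Q_acᵀ u₁. -/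
/-!
By Sherman–Morrison, near `τ = 0` the reduced matrix is
`Q_red(τ) = Q_red(0) + τ / (1 + τ wᵀQ₄⁻¹w) • z zᵀ` with `z = Q₂Q₄⁻¹w = -Q_ac w`
(symmetry of `Q₄` makes the update symmetric), so `Q_red'(0) = z zᵀ`. Differentiating
`vᵀ Q_red(τ) u(τ) = λ(τ) vᵀ u(τ)` at `0`, the terms in `u'(0)` cancel because `v` is a left
eigenvector, and `vᵀu(0) = 1` leaves `λ'(0) = vᵀ z zᵀ u(0)`.
-/

open Matrix Filter Topology

namespace Matrix

variable {n K : Type*} [Fintype n] [DecidableEq n] [Field K]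

theorem inv_add_vecMulVec {A : Matrix n n K} (hA : IsUnit A.det) {a b : n → K}
    (h : 1 + b ⬝ᵥ A⁻¹ *ᵥ a ≠ 0) :
    (A + vecMulVec a b)⁻¹ =
      A⁻¹ - (1 + b ⬝ᵥ A⁻¹ *ᵥ a)⁻¹ • vecMulVec (A⁻¹ *ᵥ a) (b ᵥ* A⁻¹) := by
  set c := 1 + b ⬝ᵥ A⁻¹ *ᵥ a
  apply inv_eq_right_inv
  have hAA : A * A⁻¹ = 1 := mul_nonsing_inv A hA
  have hA' : A * vecMulVec (A⁻¹ *ᵥ a) (b ᵥ* A⁻¹) = vecMulVec a (b ᵥ* A⁻¹) := by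
    rw [mul_vecMulVec, mulVec_mulVec, hAA, one_mulVec]
  have hab : vecMulVec a b * vecMulVec (A⁻¹ *ᵥ a) (b ᵥ* A⁻¹) =
      (c - 1) • vecMulVec a (b ᵥ* A⁻¹) := by
    rw [vecMulVec_mul_vecMulVec, vecMulVec_smul]
    simp [c]
  rw [add_mul, Matrix.mul_sub, Matrix.mul_sub, Matrix.mul_smul, Matrix.mul_smul, hAA, hA', hab,
    vecMulVec_mul, smul_smul, show c⁻¹ * (c - 1) = 1 - c⁻¹ by field_simp]
  module

theorem mul_inv_add_smul_vecMulVec_mul_transpose {m : Type*} [Fintype m] (B : Matrix m n K)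
    {A : Matrix n n K} (hAsymm : Aᵀ = A) (hA : IsUnit A.det) (w : n → K) {τ : K}
    (h : 1 + τ * (w ⬝ᵥ A⁻¹ *ᵥ w) ≠ 0) :
    B * (A + τ • vecMulVec w w)⁻¹ * Bᵀ = B * A⁻¹ * Bᵀ -
      (τ / (1 + τ * (w ⬝ᵥ A⁻¹ *ᵥ w))) • vecMulVec (B *ᵥ A⁻¹ *ᵥ w) (B *ᵥ A⁻¹ *ᵥ w) := by
  have hvecMul : w ᵥ* A⁻¹ = A⁻¹ *ᵥ w := by
    rw [← vecMul_transpose, transpose_nonsing_inv, hAsymm]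
  rw [← smul_vecMulVec, inv_add_vecMulVec hA (by rwa [mulVec_smul, dotProduct_smul, smul_eq_mul]),
    mulVec_smul, dotProduct_smul, smul_eq_mul, smul_vecMulVec, smul_smul, hvecMul,
    Matrix.mul_sub, Matrix.sub_mul, Matrix.mul_smul, Matrix.smul_mul, mul_vecMulVec,
    vecMulVec_mul, vecMul_transpose, inv_mul_eq_div]

end Matrix

section Derivatives

variable {n 𝕜 : Type*} [Fintype n] [NontriviallyNormedField 𝕜]

theorem HasDerivAt.dotProduct {f g : 𝕜 → n → 𝕜} {f' g' : n → 𝕜} {t : 𝕜}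
    (hf : HasDerivAt f f' t) (hg : HasDerivAt g g' t) :
    HasDerivAt (fun τ => f τ ⬝ᵥ g τ) (f' ⬝ᵥ g t + f t ⬝ᵥ g') t := by
  simpa only [_root_.dotProduct, Finset.sum_add_distrib] using
    HasDerivAt.fun_sum fun k _ => (hasDerivAt_pi.1 hf k).fun_mul (hasDerivAt_pi.1 hg k)

theorem Matrix.hasDerivAt_eigenvalue {Q : 𝕜 → Matrix n n 𝕜} {Q' : Matrix n n 𝕜}
    {lam : 𝕜 → 𝕜} {u : 𝕜 → n → 𝕜} {v : n → 𝕜} {t : 𝕜}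
    (hQ : ∀ a b, HasDerivAt (fun τ => Q τ a b) (Q' a b) t) (hlam : DifferentiableAt 𝕜 lam t)
    (hu : DifferentiableAt 𝕜 u t) (heig : ∀ᶠ τ in 𝓝 t, Q τ *ᵥ u τ = lam τ • u τ)
    (hv : v ᵥ* Q t = lam t • v) (hnorm : v ⬝ᵥ u t = 1) :
    HasDerivAt lam (v ⬝ᵥ Q' *ᵥ u t) t := by
  have hvQ : HasDerivAt (fun τ => v ᵥ* Q τ) (v ᵥ* Q') t := hasDerivAt_pi.2 fun b =>
    ((hasDerivAt_const t v).dotProduct (hasDerivAt_pi.2 fun a => hQ a b)).congr_deriv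
      (by rw [zero_dotProduct, zero_add]; rfl)
  have hpair : (fun τ => (v ᵥ* Q τ) ⬝ᵥ u τ) =ᶠ[𝓝 t] fun τ => lam τ * (v ⬝ᵥ u τ) :=
    heig.mono fun τ h => by
      dsimp only
      rw [← dotProduct_mulVec, h, dotProduct_smul, smul_eq_mul]
  have hderiv := ((hvQ.dotProduct hu.hasDerivAt).congr_of_eventuallyEq hpair.symm).unique
    (hlam.hasDerivAt.mul ((hasDerivAt_const t v).dotProduct hu.hasDerivAt))
  rw [hv, smul_dotProduct, smul_eq_mul, zero_dotProduct, zero_add, hnorm, mul_one,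
    ← dotProduct_mulVec, add_left_inj] at hderiv
  exact hderiv ▸ hlam.hasDerivAt

theorem Matrix.hasDerivAt_sub_mul_inv_add_smul_vecMulVec_mul_transpose_apply [DecidableEq n]
    {m : Type*} [Fintype m] (Q1 : Matrix m m 𝕜) (Q2 : Matrix m n 𝕜) {Q4 : Matrix n n 𝕜}
    (hQ4symm : Q4ᵀ = Q4) (hQ4 : IsUnit Q4.det) (w : n → 𝕜) (a b : m) :
    HasDerivAt (fun τ : 𝕜 => (Q1 - Q2 * (Q4 + τ • vecMulVec w w)⁻¹ * Q2ᵀ) a b)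
      (vecMulVec (Q2 *ᵥ Q4⁻¹ *ᵥ w) (Q2 *ᵥ Q4⁻¹ *ᵥ w) a b) 0 := by
  set c := w ⬝ᵥ Q4⁻¹ *ᵥ w
  set Z := vecMulVec (Q2 *ᵥ Q4⁻¹ *ᵥ w) (Q2 *ᵥ Q4⁻¹ *ᵥ w)
  have hden : HasDerivAt (fun τ : 𝕜 => 1 + τ * c) c 0 := by
    simpa using ((hasDerivAt_id (0 : 𝕜)).mul_const c).const_add 1
  have hs : HasDerivAt (fun τ => τ / (1 + τ * c)) 1 0 := by
    simpa using (hasDerivAt_id (0 : 𝕜)).fun_div hden (by simp)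
  have hformula : (fun τ : 𝕜 => (Q1 - Q2 * (Q4 + τ • vecMulVec w w)⁻¹ * Q2ᵀ) a b) =ᶠ[𝓝 0]
      fun τ => Q1 a b - ((Q2 * Q4⁻¹ * Q2ᵀ) a b - τ / (1 + τ * c) * Z a b) :=
    (hden.continuousAt.eventually_ne (by simp : (1 : 𝕜) + 0 * c ≠ 0)).mono fun τ h => by
      dsimp only
      rw [sub_apply, mul_inv_add_smul_vecMulVec_mul_transpose Q2 hQ4symm hQ4 w h, sub_apply,
        smul_apply, smul_eq_mul]
  refine HasDerivAt.congr_of_eventuallyEq ?_ hformula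
  simpa using ((hs.mul_const (Z a b)).const_sub ((Q2 * Q4⁻¹ * Q2ᵀ) a b)).const_sub (Q1 a b)

end Derivatives

theorem lemma1_interior_sensitivity_general {m p : ℕ}
    (Q1 : Matrix (Fin m) (Fin m) ℝ) (Q2 : Matrix (Fin m) (Fin p) ℝ)
    (Q4 : Matrix (Fin p) (Fin p) ℝ) (hQ4sym : Q4ᵀ = Q4) (hQ4 : IsUnit Q4.det)
    (w : Fin p → ℝ)
    (Qred : ℝ → Matrix (Fin m) (Fin m) ℝ)
    (hQred : ∀ τ : ℝ, Qred τ = Q1 - Q2 * (Q4 + τ • vecMulVec w w)⁻¹ * Q2ᵀ)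
    (Qac : Matrix (Fin m) (Fin p) ℝ) (hQac : Qac = -(Q2 * Q4⁻¹))
    (lam : ℝ → ℝ) (u : ℝ → (Fin m → ℝ))
    (hlam : DifferentiableAt ℝ lam 0) (hu : DifferentiableAt ℝ u 0)
    (heig : ∀ᶠ τ : ℝ in nhds 0, Qred τ *ᵥ u τ = lam τ • u τ)
    (v : Fin m → ℝ)
    (hv : v ᵥ* Qred 0 = lam 0 • v)
    (hnorm : v ⬝ᵥ u 0 = 1) :
    deriv lam 0 = (v ⬝ᵥ (Qac *ᵥ w)) * ((Qac *ᵥ w) ⬝ᵥ u 0) := by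
  obtain rfl : Qred = fun τ => Q1 - Q2 * (Q4 + τ • vecMulVec w w)⁻¹ * Q2ᵀ := funext hQred
  have hQac_w : Qac *ᵥ w = -(Q2 *ᵥ Q4⁻¹ *ᵥ w) := by rw [hQac, neg_mulVec, mulVec_mulVec]
  have hderiv := hasDerivAt_eigenvalue
    (hasDerivAt_sub_mul_inv_add_smul_vecMulVec_mul_transpose_apply Q1 Q2 hQ4sym hQ4 w)
    hlam hu heig hv hnorm
  rw [hderiv.deriv, dotProduct_mulVec, vecMul_vecMulVec, smul_dotProduct, smul_eq_mul, hQac_w,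
    dotProduct_neg, neg_dotProduct, neg_mul_neg]

/-- Lemma 1 of the paper: sensitivity of an eigenvalue of the Kron-reduced grounded
Laplacian to a perturbation of the susceptance `B_ij` between two interior nodes `i` and
`j` (so `w = e_i - e_j`):
`λ'(0) = v₁ᵀ Q_ac (e_i - e_j)(e_i - e_j)ᵀ Q_acᵀ u₁`. -/
theorem lemma1_interior_sensitivity {m p : ℕ}
    (Q1 : Matrix (Fin m) (Fin m) ℝ) (Q2 : Matrix (Fin m) (Fin p) ℝ)
    (Q4 : Matrix (Fin p) (Fin p) ℝ) (hQ4sym : Q4ᵀ = Q4) (hQ4 : IsUnit Q4.det)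
    (i j : Fin p) (hij : i ≠ j)
    (w : Fin p → ℝ) (hw : w = Pi.single i 1 - Pi.single j 1)
    (Qred : ℝ → Matrix (Fin m) (Fin m) ℝ)
    (hQred : ∀ τ : ℝ, Qred τ = Q1 - Q2 * (Q4 + τ • vecMulVec w w)⁻¹ * Q2ᵀ)
    (Qac : Matrix (Fin m) (Fin p) ℝ) (hQac : Qac = -(Q2 * Q4⁻¹))
    (lam : ℝ → ℝ) (u : ℝ → (Fin m → ℝ))
    (hlam : DifferentiableAt ℝ lam 0) (hu : DifferentiableAt ℝ u 0)
    (heig : ∀ᶠ τ : ℝ in nhds 0, Qred τ *ᵥ u τ = lam τ • u τ)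
    (v : Fin m → ℝ)
    (hv : v ᵥ* Qred 0 = lam 0 • v)
    (hnorm : v ⬝ᵥ u 0 = 1) :
    deriv lam 0 = (v ⬝ᵥ (Qac *ᵥ w)) * ((Qac *ᵥ w) ⬝ᵥ u 0) :=
  lemma1_interior_sensitivity_general Q1 Q2 Q4 hQ4sym hQ4 w Qred hQred Qac hQac lam u hlam hu heig v
    hv hnorm
end

section
/- Let m, p be natural numbers, Q₁ a real m×m matrix, Q₂ a real m×p matrix, and Q₄ a real p×p matrix with Q₄ᵀ = Q₄ and Q₄ invertible. Let i ∈ Fin p and set w := e_i ∈ ℝ^p. Define Q_red(τ) := Q₁ - Q₂ * (Q₄ + τ • (w wᵀ))⁻¹ * Q₂ᵀ and Q_ac := -(Q₂ * Q₄⁻¹). Suppose λ : ℝ → ℝ and u : ℝ → ℝ^m are differentiable at 0, and for all τ in some neighborhood of 0 the eigen-equation Q_red(τ) *ᵥ u(τ) = λ(τ) • u(τ) holds. Let v ∈ ℝ^m satisfy vᵀ * Q_red(0) = λ(0) • vᵀ and v ⬝ᵥ u(0) = 1. Then λ'(0) = (v ⬝ᵥ (Q_ac *ᵥ e_i)) *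 ((Q_ac *ᵥ e_i) ⬝ᵥ u(0)); i.e. the sensitivity of the eigenvalue of the Kron-reduced matrix to a perturbation of the self-loop of interior node i (the susceptance between interior node i and the infinite bus) equals v₁ᵀ Q_ac e_i e_iᵀ Q_acᵀ u₁. -/
/-!
The eigen-equation `Q_red(τ) u(τ) = λ(τ) u(τ)`, paired with the left eigenvector `v` of
`Q_red(0)`, gives `vᵀ Q_red(τ) u(τ) = λ(τ) vᵀ u(τ)`; differentiating at `0`, the terms containing
`u'(0)` cancel because `vᵀ Q_red(0) = λ(0) vᵀ`, so `λ'(0) = vᵀ Q_red'(0) u(0)`. Differentiating the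
inverse in the Kron reduction gives `Q_red'(0) = Q₂ Q₄⁻¹ e_i e_iᵀ Q₄⁻¹ Q₂ᵀ`, which by the symmetry
of `Q₄` is the rank-one matrix `(Q_ac e_i)(Q_ac e_i)ᵀ`.
-/

open Matrix

section Calculus

variable {𝕜 E F G : Type*} [NontriviallyNormedField 𝕜] [CompleteSpace 𝕜]
  [NormedAddCommGroup E] [NormedSpace 𝕜 E] [FiniteDimensional 𝕜 E]
  [NormedAddCommGroup F] [NormedSpace 𝕜 F]
  [NormedAddCommGroup G] [NormedSpace 𝕜 G]
  {f : 𝕜 → E} {g : 𝕜 → F} {f' : E} {g' : F} {t : 𝕜}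

theorem HasDerivAt.linearMap_comp (L : E →ₗ[𝕜] F) (hf : HasDerivAt f f' t) :
    HasDerivAt (fun τ => L (f τ)) (L f') t :=
  (LinearMap.toContinuousLinearMap L).hasFDerivAt.comp_hasDerivAt t hf

theorem HasDerivAt.linearMap_apply₂ [FiniteDimensional 𝕜 F] (B : E →ₗ[𝕜] F →ₗ[𝕜] G)
    (hf : HasDerivAt f f' t) (hg : HasDerivAt g g' t) :
    HasDerivAt (fun τ => B (f τ) (g τ)) (B (f t) g' + B f' (g t)) t :=
  (LinearMap.toContinuousLinearMap
    (LinearMap.toContinuousLinearMap.toLinearMap ∘ₗ B)).hasDerivAt_of_bilinear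
    (fun _ => hf) (fun _ => hg)

end Calculus

namespace Matrix

section RankOne

variable {R m n : Type*} [CommSemiring R] [Fintype n]

theorem mul_vecMulVec_mul_transpose (A : Matrix m n R) (x y : n → R) :
    A * vecMulVec x y * Aᵀ = vecMulVec (A *ᵥ x) (A *ᵥ y) := by
  rw [mul_vecMulVec, vecMulVec_mul, vecMul_transpose]

theorem dotProduct_vecMulVec_mulVec [Fintype m] (v a : m → R) (b x : n → R) :
    v ⬝ᵥ (vecMulVec a b *ᵥ x) = (v ⬝ᵥ a) * (b ⬝ᵥ x) := by
  rw [vecMulVec_mulVec, op_smul_eq_smul, dotProduct_smul, smul_eq_mul, mul_comm]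

end RankOne

section Derivatives

attribute [local instance] Matrix.linftyOpNormedAddCommGroup Matrix.linftyOpNormedSpace
  Matrix.linftyOpNormedRing Matrix.linftyOpNormedAlgebra

variable {𝕜 : Type*} [RCLike 𝕜] {m n : Type*} [Fintype m] [Fintype n] [DecidableEq n]

theorem hasDerivAt_inv_add_smul {Q : Matrix n n 𝕜} (W : Matrix n n 𝕜) (hQ : IsUnit Q.det) :
    HasDerivAt (fun τ : 𝕜 => (Q + τ • W)⁻¹) (-(Q⁻¹ * W * Q⁻¹)) 0 := by
  have hQ' : IsUnit Q := (isUnit_iff_isUnit_det Q).mpr hQ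
  have hline : HasDerivAt (fun τ : 𝕜 => Q + τ • W) W 0 := by
    have h := ((hasDerivAt_id (0 : 𝕜)).smul_const W).const_add Q
    rwa [one_smul] at h
  have hinv := (hasFDerivAt_ringInverse (𝕜 := 𝕜) hQ'.unit).comp_hasDerivAt_of_eq (0 : 𝕜)
    hline (by simp)
  simp only [Function.comp_def, ← nonsing_inv_eq_ringInverse, coe_units_inv,
    hQ'.unit_spec] at hinv
  rwa [_root_.neg_apply, ContinuousLinearMap.mulLeftRight_apply] at hinv

theorem hasDerivAt_sub_mul_inv_add_smul_mul (A : Matrix m m 𝕜) (B : Matrix m n 𝕜)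
    (C : Matrix n m 𝕜) {Q : Matrix n n 𝕜} (W : Matrix n n 𝕜) (hQ : IsUnit Q.det) :
    HasDerivAt (fun τ : 𝕜 => A - B * (Q + τ • W)⁻¹ * C) (B * (Q⁻¹ * W * Q⁻¹) * C) 0 := by
  let sandwich : Matrix n n 𝕜 →ₗ[𝕜] Matrix m m 𝕜 :=
    { toFun := fun M => B * M * C
      map_add' := fun M N => by rw [Matrix.mul_add, Matrix.add_mul]
      map_smul' := fun c M => by rw [Matrix.mul_smul, Matrix.smul_mul]; rfl }
  have h := ((hasDerivAt_inv_add_smul W hQ).linearMap_comp sandwich).const_sub A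
  simp only [sandwich, LinearMap.coe_mk, AddHom.coe_mk, Matrix.mul_neg, Matrix.neg_mul,
    neg_neg] at h
  exact h

theorem eq_dotProduct_mulVec_of_hasDerivAt_eigenvalue {A : 𝕜 → Matrix n n 𝕜} {A' : Matrix n n 𝕜}
    {lam : 𝕜 → 𝕜} {lam' : 𝕜} {u : 𝕜 → n → 𝕜} {u' : n → 𝕜} {v : n → 𝕜} {t : 𝕜}
    (hA : HasDerivAt A A' t) (hlam : HasDerivAt lam lam' t) (hu : HasDerivAt u u' t)
    (heig : ∀ᶠ τ in nhds t, A τ *ᵥ u τ = lam τ • u τ)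
    (hv : v ᵥ* A t = lam t • v) (hnorm : v ⬝ᵥ u t = 1) :
    lam' = v ⬝ᵥ (A' *ᵥ u t) := by
  have hform : HasDerivAt (fun τ => v ⬝ᵥ (A τ *ᵥ u τ))
      (v ⬝ᵥ (A t *ᵥ u') + v ⬝ᵥ (A' *ᵥ u t)) t := by
    simpa [toLinearMap₂'_apply'] using
      hA.linearMap_apply₂ ((toLinearMap₂' 𝕜 : Matrix n n 𝕜 ≃ₗ[𝕜] _).toLinearMap.flip v) hu
  have hscaled : HasDerivAt (fun τ => lam τ * (v ⬝ᵥ u τ))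
      (lam' * (v ⬝ᵥ u t) + lam t * (v ⬝ᵥ u')) t :=
    hlam.mul (hu.linearMap_comp (dotProductBilin 𝕜 𝕜 v))
  have heq := hform.unique (hscaled.congr_of_eventuallyEq (heig.mono fun τ hτ => by
    simp only [hτ, dotProduct_smul, smul_eq_mul]))
  rw [dotProduct_mulVec, hv, smul_dotProduct, smul_eq_mul, hnorm] at heq
  linear_combination -heq

end Derivatives

end Matrix

/-- Extension of Lemma 1 to a perturbation between an interior node `i` and the infinite
bus (the self-loop of interior node `i`, so `w = e_i`):
`λ'(0) = v₁ᵀ Q_ac e_i e_iᵀ Q_acᵀ u₁`. -/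
theorem lemma1_selfloop_sensitivity {m p : ℕ}
    (Q1 : Matrix (Fin m) (Fin m) ℝ) (Q2 : Matrix (Fin m) (Fin p) ℝ)
    (Q4 : Matrix (Fin p) (Fin p) ℝ) (hQ4sym : Q4ᵀ = Q4) (hQ4 : IsUnit Q4.det)
    (i : Fin p)
    (w : Fin p → ℝ) (hw : w = Pi.single i 1)
    (Qred : ℝ → Matrix (Fin m) (Fin m) ℝ)
    (hQred : ∀ τ : ℝ, Qred τ = Q1 - Q2 * (Q4 + τ • vecMulVec w w)⁻¹ * Q2ᵀ)
    (Qac : Matrix (Fin m) (Fin p) ℝ) (hQac : Qac = -(Q2 * Q4⁻¹))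
    (lam : ℝ → ℝ) (u : ℝ → (Fin m → ℝ))
    (hlam : DifferentiableAt ℝ lam 0) (hu : DifferentiableAt ℝ u 0)
    (heig : ∀ᶠ τ : ℝ in nhds 0, Qred τ *ᵥ u τ = lam τ • u τ)
    (v : Fin m → ℝ)
    (hv : v ᵥ* Qred 0 = lam 0 • v)
    (hnorm : v ⬝ᵥ u 0 = 1) :
    deriv lam 0 = (v ⬝ᵥ (Qac *ᵥ Pi.single i 1)) * ((Qac *ᵥ Pi.single i 1) ⬝ᵥ u 0) := by
  have hQred' : HasDerivAt Qred (Q2 * (Q4⁻¹ * vecMulVec w w * Q4⁻¹) * Q2ᵀ) 0 := by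
    rw [funext hQred]
    exact hasDerivAt_sub_mul_inv_add_smul_mul Q1 Q2 Q2ᵀ _ hQ4
  have hrankOne :
      Q2 * (Q4⁻¹ * vecMulVec w w * Q4⁻¹) * Q2ᵀ = vecMulVec (Qac *ᵥ w) (Qac *ᵥ w) := by
    rw [← mul_vecMulVec_mul_transpose, hQac, transpose_neg, transpose_mul, transpose_nonsing_inv,
      hQ4sym]
    simp only [Matrix.neg_mul, Matrix.mul_neg, neg_neg, Matrix.mul_assoc]
  rw [eq_dotProduct_mulVec_of_hasDerivAt_eigenvalue hQred' hlam.hasDerivAt hu.hasDerivAt heig hv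
    hnorm, hrankOne, dotProduct_vecMulVec_mulVec, hw]
end
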